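/- arXiv:1309.6144 — 3 statements merged into one kernel-verified Lean document; each statement's English description precedes it below -/
import Mathlib

section
/- Let G be a nonempty finite simple graph, G₀ and G₁ disjoint copies of G, and G' the graph obtained from their disjoint union by adding vertices u,v with u adjacent to all of G₀, v adjacent to all of G₁, and u adjacent to v. Then i(G') = i(G) + 1. -/
open SimpleGraph

variable {V : Type*}

/-- A set of vertices is independent if no two of its elements are adjacent. -/
def SimpleGraph.IsIndepSet' (G : SimpleGraph V) (s : Set V) : Prop :=
  s.Pairwise fun a b => ¬ G.Adj a b

/-- A set of vertices is a vertex cover if it meets every edge. -/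
def SimpleGraph.IsVertexCover' (G : SimpleGraph V) (s : Set V) : Prop :=
  ∀ ⦃u v : V⦄, G.Adj u v → u ∈ s ∨ v ∈ s

/-- A set of vertices is dominating if every vertex is in it or adjacent to one of its members. -/
def SimpleGraph.IsDomSet (G : SimpleGraph V) (D : Set V) : Prop :=
  ∀ v : V, v ∈ D ∨ ∃ u ∈ D, G.Adj u v

/-- A feedback vertex set: removing it leaves an acyclic graph. -/
def SimpleGraph.IsFVS (G : SimpleGraph V) (F : Set V) : Prop :=
  (G.induce (Fᶜ : Set V)).IsAcyclic

/-- α(G): the maximum size of an independent set. -/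
noncomputable def SimpleGraph.indepNum' (G : SimpleGraph V) : ℕ :=
  sSup {n | ∃ s : Set V, G.IsIndepSet' s ∧ s.ncard = n}

/-- τ(G): the minimum size of a vertex cover. -/
noncomputable def SimpleGraph.vcNum (G : SimpleGraph V) : ℕ :=
  sInf {n | ∃ s : Set V, G.IsVertexCover' s ∧ s.ncard = n}

/-- ω(G): the maximum size of a clique. -/
noncomputable def SimpleGraph.omegaNum (G : SimpleGraph V) : ℕ :=
  sSup {n | ∃ s : Set V, G.IsClique s ∧ s.ncard = n}

/-- γ(G): the minimum size of a dominating set. -/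
noncomputable def SimpleGraph.domNum (G : SimpleGraph V) : ℕ :=
  sInf {n | ∃ D : Set V, G.IsDomSet D ∧ D.ncard = n}

/-- i(G): the minimum size of an independent dominating set. -/
noncomputable def SimpleGraph.indepDomNum (G : SimpleGraph V) : ℕ :=
  sInf {n | ∃ D : Set V, G.IsIndepSet' D ∧ G.IsDomSet D ∧ D.ncard = n}

/-- ν(G): the minimum size of a feedback vertex set. -/
noncomputable def SimpleGraph.fvsNum (G : SimpleGraph V) : ℕ :=
  sInf {n | ∃ F : Set V, G.IsFVS F ∧ F.ncard = n}

/-- The graph G' of the paper: two disjoint copies of G plus u (= inr false) dominating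
copy 0, v (= inr true) dominating copy 1, and the edge uv. -/
def SimpleGraph.twoCopiesExt (G : SimpleGraph V) : SimpleGraph ((V ⊕ V) ⊕ Bool) :=
  SimpleGraph.fromRel (fun x y =>
    (∃ a b, x = .inl (.inl a) ∧ y = .inl (.inl b) ∧ G.Adj a b) ∨
    (∃ a b, x = .inl (.inr a) ∧ y = .inl (.inr b) ∧ G.Adj a b) ∨
    (∃ a, x = .inr false ∧ y = .inl (.inl a)) ∨
    (∃ a, x = .inr true ∧ y = .inl (.inr a)) ∨
    (x = .inr false ∧ y = .inr true))

/-!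
An independent dominating set of `G'` contains at most one of the adjacent apexes `u`, `v`. If the
apex of copy `i` is missing, the trace of the set on copy `i` dominates `G`, and dominating the
other apex forces a further vertex outside copy `i`; hence `i(G) + 1 ≤ i(G')`. Conversely, a
minimum independent dominating set of copy `0` together with `v` is independent and dominating
in `G'`.
-/

namespace SimpleGraph

variable {W : Type*} {H : SimpleGraph W} {D : Set W}

theorem isDomSet_of_maximal_isIndepSet' (hD : Maximal H.IsIndepSet' D) : H.IsDomSet D := by
  intro v
  by_contra! hv
  have hins : H.IsIndepSet' (insert v D) :=
    Set.Pairwise.insert hD.prop fun w hw _ => ⟨hv.2 w hw ∘ H.adj_symm, hv.2 w hw⟩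
  exact hv.1 (hD.2 hins (Set.subset_insert v D) (Set.mem_insert v D))

theorem exists_isIndepSet'_isDomSet [Finite W] (H : SimpleGraph W) :
    ∃ D : Set W, H.IsIndepSet' D ∧ H.IsDomSet D := by
  obtain ⟨D, hD⟩ := Set.Finite.exists_maximal (Set.toFinite {D : Set W | H.IsIndepSet' D})
    ⟨∅, Set.pairwise_empty _⟩
  exact ⟨D, hD.prop, isDomSet_of_maximal_isIndepSet' hD⟩

theorem indepDomNum_le (hi : H.IsIndepSet' D) (hd : H.IsDomSet D) : H.indepDomNum ≤ D.ncard :=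
  Nat.sInf_le ⟨D, hi, hd, rfl⟩

theorem exists_indepDomNum_eq [Finite W] (H : SimpleGraph W) :
    ∃ D : Set W, H.IsIndepSet' D ∧ H.IsDomSet D ∧ D.ncard = H.indepDomNum := by
  obtain ⟨D, hi, hd⟩ := H.exists_isIndepSet'_isDomSet
  exact Nat.sInf_mem (s := {n | ∃ D : Set W, H.IsIndepSet' D ∧ H.IsDomSet D ∧ D.ncard = n})
    ⟨D.ncard, D, hi, hd, rfl⟩

theorem le_indepDomNum [Finite W] {n : ℕ}
    (h : ∀ D : Set W, H.IsIndepSet' D → H.IsDomSet D → n ≤ D.ncard) : n ≤ H.indepDomNum := by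
  obtain ⟨D, hi, hd, hD⟩ := H.exists_indepDomNum_eq
  exact hD ▸ h D hi hd

end SimpleGraph

namespace SimpleGraph.twoCopiesExt

/-- The `i`-th copy of `V` in `G.twoCopiesExt`; its apex is `.inr i`. -/
def copy : Bool → V → (V ⊕ V) ⊕ Bool
  | false, a => .inl (.inl a)
  | true, a => .inl (.inr a)

theorem copy_injective (i : Bool) : Function.Injective (copy (V := V) i) := by
  cases i <;> intro a b h <;> simpa [copy] using h

theorem copy_ne_apex (i j : Bool) (a : V) : copy i a ≠ .inr j := by
  cases i <;> simp [copy]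

theorem vertex_cases (x : (V ⊕ V) ⊕ Bool) : (∃ i a, copy i a = x) ∨ ∃ i, .inr i = x := by
  rcases x with (a | a) | i
  exacts [.inl ⟨false, a, rfl⟩, .inl ⟨true, a, rfl⟩, .inr ⟨i, rfl⟩]

variable (G : SimpleGraph V)

@[simp]
theorem adj_copy_copy {i j : Bool} {a b : V} :
    G.twoCopiesExt.Adj (copy i a) (copy j b) ↔ i = j ∧ G.Adj a b := by
  cases i <;> cases j <;> simp [twoCopiesExt, copy, G.adj_comm b a] <;> exact G.ne_of_adj

@[simp]
theorem adj_apex_copy {i j : Bool} {a : V} :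
    G.twoCopiesExt.Adj (.inr i) (copy j a) ↔ i = j := by
  cases i <;> cases j <;> simp [twoCopiesExt, copy]

@[simp]
theorem adj_apex_apex {i j : Bool} :
    G.twoCopiesExt.Adj (.inr i) (.inr j) ↔ i ≠ j := by
  cases i <;> cases j <;> simp [twoCopiesExt]

@[simp]
theorem adj_copy_apex {i j : Bool} {a : V} :
    G.twoCopiesExt.Adj (copy j a) (.inr i) ↔ i = j := by
  rw [adj_comm, adj_apex_copy]

variable {G}

theorem isIndepSet'_insert_apex_image_copy {S : Set V} (hS : G.IsIndepSet' S) (i : Bool) :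
    G.twoCopiesExt.IsIndepSet' (insert (.inr (!i)) (copy i '' S)) := by
  refine Set.Pairwise.insert ?_ ?_
  · rintro _ ⟨a, ha, rfl⟩ _ ⟨b, hb, rfl⟩ hne
    simpa using hS ha hb (ne_of_apply_ne _ hne)
  · rintro _ ⟨a, -, rfl⟩ -
    simp

theorem isDomSet_insert_apex_image_copy {S : Set V} (hS : G.IsDomSet S) (i : Bool) :
    G.twoCopiesExt.IsDomSet (insert (.inr (!i)) (copy i '' S)) := by
  intro x
  obtain ⟨j, a, rfl⟩ | ⟨j, rfl⟩ := vertex_cases x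
  · obtain rfl | hj := eq_or_ne j i
    · rcases hS a with ha | ⟨b, hb, hba⟩
      · exact .inl (.inr ⟨a, ha, rfl⟩)
      · exact .inr ⟨copy j b, .inr ⟨b, hb, rfl⟩, by simpa⟩
    · exact .inr ⟨.inr (!i), .inl rfl, by simpa using (Bool.eq_not_of_ne hj).symm⟩
  · obtain rfl | hj := eq_or_ne j (!i)
    · exact .inl (.inl rfl)
    · exact .inr ⟨.inr (!i), .inl rfl, by simpa using hj.symm⟩

theorem indepDomNum_le_add_one [Finite V] (G : SimpleGraph V) :
    G.twoCopiesExt.indepDomNum ≤ G.indepDomNum + 1 := by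
  obtain ⟨S, hi, hd, hS⟩ := G.exists_indepDomNum_eq
  calc G.twoCopiesExt.indepDomNum ≤ (insert (.inr (!false)) (copy false '' S)).ncard :=
        indepDomNum_le (isIndepSet'_insert_apex_image_copy hi false)
          (isDomSet_insert_apex_image_copy hd false)
    _ = G.indepDomNum + 1 := by
        rw [Set.ncard_insert_of_notMem (by rintro ⟨a, -, ha⟩; exact copy_ne_apex _ _ _ ha),
          Set.ncard_image_of_injective _ (copy_injective false), hS]

variable {D : Set ((V ⊕ V) ⊕ Bool)}

theorem isIndepSet'_preimage_copy (hD : G.twoCopiesExt.IsIndepSet' D) (i : Bool) :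
    G.IsIndepSet' (copy i ⁻¹' D) :=
  fun _ ha _ hb hne hab => hD ha hb ((copy_injective i).ne hne) ((adj_copy_copy G).2 ⟨rfl, hab⟩)

theorem isDomSet_preimage_copy (hD : G.twoCopiesExt.IsDomSet D) {i : Bool} (hi : .inr i ∉ D) :
    G.IsDomSet (copy i ⁻¹' D) := by
  intro a
  rcases hD (copy i a) with ha | ⟨w, hw, hwa⟩
  · exact .inl ha
  obtain ⟨j, b, rfl⟩ | ⟨j, rfl⟩ := vertex_cases w
  · obtain ⟨rfl, hba⟩ := (adj_copy_copy G).1 hwa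
    exact .inr ⟨b, hw, hba⟩
  · obtain rfl := (adj_apex_copy G).1 hwa
    exact absurd hw hi

theorem exists_mem_notMem_range_copy (hD : G.twoCopiesExt.IsDomSet D) (i : Bool) :
    ∃ x ∈ D, x ∉ Set.range (copy i) := by
  rcases hD (.inr (!i)) with h | ⟨w, hw, hw_apex⟩
  · exact ⟨_, h, fun ⟨a, ha⟩ => copy_ne_apex _ _ _ ha⟩
  · refine ⟨w, hw, ?_⟩
    rintro ⟨a, rfl⟩
    simp at hw_apex

theorem indepDomNum_add_one_le_ncard [Finite V] (hi : G.twoCopiesExt.IsIndepSet' D)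
    (hd : G.twoCopiesExt.IsDomSet D) : G.indepDomNum + 1 ≤ D.ncard := by
  obtain ⟨i, hiD⟩ : ∃ i, .inr i ∉ D := by
    by_contra! h
    exact hi (h false) (h true) (by simp) (by simp)
  obtain ⟨x, hxD, hx⟩ := exists_mem_notMem_range_copy hd i
  have hsub : copy i '' (copy i ⁻¹' D) ⊂ D :=
    (Set.image_preimage_subset _ _).ssubset_of_mem_notMem hxD
      fun hx' => hx (Set.image_subset_range _ _ hx')
  calc G.indepDomNum + 1 ≤ (copy i ⁻¹' D).ncard + 1 := by
        gcongr
        exact indepDomNum_le (isIndepSet'_preimage_copy hi i) (isDomSet_preimage_copy hd hiD)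
    _ = (copy i '' (copy i ⁻¹' D)).ncard + 1 := by
        rw [Set.ncard_image_of_injective _ (copy_injective i)]
    _ ≤ D.ncard := Set.ncard_lt_ncard hsub

end SimpleGraph.twoCopiesExt

theorem indepDomNum_twoCopiesExt_general [Fintype V] (G : SimpleGraph V) :
    G.twoCopiesExt.indepDomNum = G.indepDomNum + 1 :=
  (twoCopiesExt.indepDomNum_le_add_one G).antisymm
    (le_indepDomNum fun _ => twoCopiesExt.indepDomNum_add_one_le_ncard)

/-- i(G') = i(G) + 1 for the two-copies construction. -/
theorem indepDomNum_twoCopiesExt [Fintype V] [Nonempty V] (G : SimpleGraph V) :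
    G.twoCopiesExt.indepDomNum = G.indepDomNum + 1 :=
  indepDomNum_twoCopiesExt_general G
end

section
/- Let G = (V,E) be a finite simple graph and V' ⊆ V. Let G_{V'} be obtained from G by adding an independent set V'' of new vertices with |V''| = |V'| and a perfect matching between V' and V''. Then γ(G_{V'}) = γ(G) if and only if G has a minimum dominating set containing every vertex of V'. Moreover γ(G_{V'}) ≥ γ(G) always holds. -/
open SimpleGraph

variable {V : Type*}

/-- G_{V'}: add a pendant independent copy V'' of V', matched to V' by a perfect matching. -/
def SimpleGraph.pendantExt (G : SimpleGraph V) (V' : Set V) : SimpleGraph (V ⊕ ↥V') :=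
  SimpleGraph.fromRel (fun x y =>
    (∃ a b, x = .inl a ∧ y = .inl b ∧ G.Adj a b) ∨
    (∃ a : V', x = .inl (a : V) ∧ y = .inr a))

namespace SimpleGraph

section pendantExt

variable {G : SimpleGraph V} {V' : Set V}

@[simp]
lemma pendantExt_adj_inl_inl {u v : V} : (G.pendantExt V').Adj (.inl u) (.inl v) ↔ G.Adj u v := by
  simp only [pendantExt, fromRel_adj]
  constructor
  · rintro ⟨-, h | h⟩ <;> rcases h with ⟨a, b, ha, hb, hab⟩ | ⟨a, ha, hb⟩ <;> simp_all [G.adj_comm]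
  · exact fun h => ⟨by simp [h.ne], Or.inl (Or.inl ⟨u, v, rfl, rfl, h⟩)⟩

@[simp]
lemma pendantExt_adj_inl_inr {u : V} {b : V'} : (G.pendantExt V').Adj (.inl u) (.inr b) ↔ u = b := by
  simp only [pendantExt, fromRel_adj]
  constructor
  · rintro ⟨-, h | h⟩ <;> rcases h with ⟨a, c, ha, hc, -⟩ | ⟨a, ha, hc⟩ <;> simp_all
  · rintro rfl
    exact ⟨by simp, Or.inl (Or.inr ⟨b, rfl, rfl⟩)⟩

@[simp]
lemma pendantExt_adj_inr_inl {b : V'} {u : V} : (G.pendantExt V').Adj (.inr b) (.inl u) ↔ b = u := by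
  rw [adj_comm, pendantExt_adj_inl_inr, eq_comm]

@[simp]
lemma not_pendantExt_adj_inr_inr {a b : V'} : ¬ (G.pendantExt V').Adj (.inr a) (.inr b) := by
  simp only [pendantExt, fromRel_adj]
  rintro ⟨-, h | h⟩ <;> rcases h with ⟨x, y, hx, hy, -⟩ | ⟨x, hx, hy⟩ <;> simp_all

/-- A pendant vertex `b''` can only be dominated by itself or its partner `b`, so folding each
`b''` onto `b` turns a dominating set of `G_{V'}` into one of `G` that contains `V'`. -/
lemma IsDomSet.image_sumElim_of_pendantExt {D : Set (V ⊕ V')}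
    (hD : (G.pendantExt V').IsDomSet D) :
    G.IsDomSet (Sum.elim id Subtype.val '' D) ∧ V' ⊆ Sum.elim id Subtype.val '' D := by
  constructor
  · intro v
    rcases hD (.inl v) with h | ⟨w | b, hw, hadj⟩
    · exact Or.inl ⟨_, h, rfl⟩
    · exact Or.inr ⟨w, ⟨_, hw, rfl⟩, pendantExt_adj_inl_inl.mp hadj⟩
    · exact Or.inl ⟨_, hw, pendantExt_adj_inr_inl.mp hadj⟩
  · intro v hv
    rcases hD (.inr ⟨v, hv⟩) with h | ⟨w | b, hw, hadj⟩
    · exact ⟨_, h, rfl⟩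
    · exact ⟨_, hw, pendantExt_adj_inl_inr.mp hadj⟩
    · exact absurd hadj not_pendantExt_adj_inr_inr

lemma IsDomSet.image_inl_pendantExt {D : Set V} (hD : G.IsDomSet D) (hV' : V' ⊆ D) :
    (G.pendantExt V').IsDomSet (Sum.inl '' D) := by
  rintro (v | b)
  · rcases hD v with h | ⟨u, hu, hadj⟩
    · exact Or.inl ⟨v, h, rfl⟩
    · exact Or.inr ⟨.inl u, ⟨u, hu, rfl⟩, pendantExt_adj_inl_inl.mpr hadj⟩
  · exact Or.inr ⟨.inl b, ⟨b, hV' b.2, rfl⟩, pendantExt_adj_inl_inr.mpr rfl⟩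

end pendantExt

lemma domNum_le_ncard {W : Type*} (G : SimpleGraph W) {D : Set W} (hD : G.IsDomSet D) :
    G.domNum ≤ D.ncard :=
  Nat.sInf_le ⟨D, hD, rfl⟩

lemma exists_isDomSet_ncard_eq_domNum {W : Type*} [Finite W] (G : SimpleGraph W) :
    ∃ D : Set W, G.IsDomSet D ∧ D.ncard = G.domNum :=
  Nat.sInf_mem (s := {n | ∃ D : Set W, G.IsDomSet D ∧ D.ncard = n})
    ⟨Set.univ.ncard, Set.univ, fun _ => Or.inl trivial, rfl⟩

lemma domNum_pendantExt_le_ncard {G : SimpleGraph V} {V' D : Set V}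
    (hD : G.IsDomSet D) (hV' : V' ⊆ D) : (G.pendantExt V').domNum ≤ D.ncard :=
  Set.ncard_image_of_injective D Sum.inl_injective ▸
    domNum_le_ncard _ (hD.image_inl_pendantExt hV')

/-- `γ(G_{V'})` is the least size of a dominating set of `G` containing `V'`. -/
lemma exists_isDomSet_superset_ncard_eq_domNum_pendantExt [Finite V] (G : SimpleGraph V)
    (V' : Set V) : ∃ D : Set V, G.IsDomSet D ∧ V' ⊆ D ∧ D.ncard = (G.pendantExt V').domNum := by
  obtain ⟨D', hD', hcard⟩ := exists_isDomSet_ncard_eq_domNum (G.pendantExt V')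
  obtain ⟨hD, hV'⟩ := hD'.image_sumElim_of_pendantExt
  exact ⟨_, hD, hV', le_antisymm (hcard ▸ Set.ncard_image_le (Set.toFinite D'))
    (domNum_pendantExt_le_ncard hD hV')⟩

end SimpleGraph

/-- γ(G_{V'}) ≥ γ(G), and γ(G_{V'}) = γ(G) iff G has a minimum
dominating set containing every vertex of V'. -/
theorem domNum_pendantExt [Fintype V] (G : SimpleGraph V) (V' : Set V) :
    G.domNum ≤ (G.pendantExt V').domNum ∧
      ((G.pendantExt V').domNum = G.domNum ↔
        ∃ D : Set V, G.IsDomSet D ∧ D.ncard = G.domNum ∧ V' ⊆ D) := by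
  obtain ⟨D, hD, hV', hcard⟩ := exists_isDomSet_superset_ncard_eq_domNum_pendantExt G V'
  have hle : G.domNum ≤ (G.pendantExt V').domNum := hcard ▸ domNum_le_ncard G hD
  refine ⟨hle, fun heq => ⟨D, hD, hcard.trans heq, hV'⟩, ?_⟩
  rintro ⟨D₀, hD₀, hcard₀, hV'₀⟩
  exact le_antisymm (hcard₀ ▸ domNum_pendantExt_le_ncard hD₀ hV'₀) hle
end

section
/- Let G be a finite simple graph, k ≥ i(G), and let G_k be the graph on V(G) × {1,…,k} where each layer V × {i} induces a clique and (u,i) ~ (v,j) for i ≠ j iff v ∈ N_G[u]. Then i(G_k) = i(G). -/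
open SimpleGraph

variable {V : Type*}

/-- G_k of the paper: k layers each inducing a clique, with (u,i) ~ (v,j) for i ≠ j
iff v ∈ N_G[u]. -/
def SimpleGraph.layeredExt (G : SimpleGraph V) (k : ℕ) : SimpleGraph (V × Fin k) :=
  SimpleGraph.fromRel (fun x y =>
    x.2 = y.2 ∨ x.1 = y.1 ∨ G.Adj x.1 y.1)

/-!
A minimum independent dominating set `D` of `G` lifts to `G_k` by placing its `|D| ≤ k` vertices
in distinct layers: distinct layers and distinct non-adjacent base vertices keep the lift
independent, and `(v, j)` is dominated by the lift of whichever vertex of `D` dominates `v` (or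
of `v` itself). Conversely, an independent set `E` of `G_k` meets each layer and each fibre
`{v} × Fin k` at most once. If `E` meets every layer then `|E| = k ≥ i(G)`; otherwise a missed
layer can only be dominated from other layers, i.e. by vertices whose projections dominate `G`,
so the projection of `E` is an independent dominating set of `G` of size `|E|`.
-/

open Set

namespace SimpleGraph

variable (G : SimpleGraph V) {k : ℕ}

@[simp]
lemma layeredExt_adj {x y : V × Fin k} :
    (G.layeredExt k).Adj x y ↔ x ≠ y ∧ (x.2 = y.2 ∨ x.1 = y.1 ∨ G.Adj x.1 y.1) := by
  simp only [layeredExt, fromRel_adj]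
  refine and_congr_right fun _ => ⟨?_, Or.inl⟩
  rintro (h | h)
  · exact h
  · rcases h with h | h | h
    · exact Or.inl h.symm
    · exact Or.inr (Or.inl h.symm)
    · exact Or.inr (Or.inr h.symm)

variable {G}

lemma IsIndepSet'.isDomSet_of_maximal {D : Set V} (hD : Maximal G.IsIndepSet' D) :
    G.IsDomSet D := by
  intro v
  by_contra! hv
  have hins : G.IsIndepSet' (insert v D) :=
    hD.prop.insert fun u hu _ => ⟨fun h => hv.2 u hu h.symm, hv.2 u hu⟩
  exact hv.1 (hD.2 hins (subset_insert v D) (mem_insert v D))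

lemma exists_isIndepSet'_isDomSet_ncard_eq_indepDomNum [Finite V] :
    ∃ D : Set V, G.IsIndepSet' D ∧ G.IsDomSet D ∧ D.ncard = G.indepDomNum := by
  obtain ⟨D, -, hD⟩ := Finite.exists_le_maximal (α := Set V) (p := G.IsIndepSet')
    (a := ∅) (pairwise_empty _)
  have hne : {n | ∃ D : Set V, G.IsIndepSet' D ∧ G.IsDomSet D ∧ D.ncard = n}.Nonempty :=
    ⟨D.ncard, D, hD.prop, IsIndepSet'.isDomSet_of_maximal hD, rfl⟩
  exact Nat.sInf_mem hne

lemma indepDomNum_le_ncard {D : Set V} (hind : G.IsIndepSet' D) (hdom : G.IsDomSet D) :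
    G.indepDomNum ≤ D.ncard :=
  Nat.sInf_le ⟨D, hind, hdom, rfl⟩

section Lift

variable {D : Set V} {e : D → Fin k}

def liftToLayers (D : Set V) (e : D → Fin k) : Set (V × Fin k) :=
  range fun d : D => ((d : V), e d)

lemma ncard_liftToLayers : (liftToLayers D e).ncard = D.ncard := by
  rw [liftToLayers, ncard_range_of_injective, Nat.card_coe_set_eq]
  intro a b h
  exact Subtype.ext (congrArg Prod.fst h)

lemma IsIndepSet'.liftToLayers (hD : G.IsIndepSet' D) (he : Function.Injective e) :
    (G.layeredExt k).IsIndepSet' (liftToLayers D e) := by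
  rintro _ ⟨a, rfl⟩ _ ⟨b, rfl⟩ hne hadj
  have hab : (a : V) ≠ b := fun h => hne (by rw [Subtype.ext h])
  rcases (G.layeredExt_adj.1 hadj).2 with h | h | h
  · exact hab (congrArg Subtype.val (he h))
  · exact hab h
  · exact hD a.2 b.2 hab h

lemma IsDomSet.liftToLayers (hD : G.IsDomSet D) :
    (G.layeredExt k).IsDomSet (liftToLayers D e) := by
  rintro ⟨v, j⟩
  rcases hD v with hv | ⟨u, hu, huv⟩
  · by_cases hj : j = e ⟨v, hv⟩
    · exact Or.inl ⟨⟨v, hv⟩, by rw [hj]⟩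
    · have hne : (v, e ⟨v, hv⟩) ≠ (v, j) := fun h => hj (congrArg Prod.snd h).symm
      exact Or.inr ⟨_, ⟨⟨v, hv⟩, rfl⟩, G.layeredExt_adj.2 ⟨hne, Or.inr (Or.inl rfl)⟩⟩
  · have hne : (u, e ⟨u, hu⟩) ≠ (v, j) := fun h => G.ne_of_adj huv (congrArg Prod.fst h)
    exact Or.inr ⟨_, ⟨⟨u, hu⟩, rfl⟩, G.layeredExt_adj.2 ⟨hne, Or.inr (Or.inr huv)⟩⟩

end Lift

lemma indepDomNum_layeredExt_le [Finite V] (hk : G.indepDomNum ≤ k) :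
    (G.layeredExt k).indepDomNum ≤ G.indepDomNum := by
  obtain ⟨D, hind, hdom, hcard⟩ := G.exists_isIndepSet'_isDomSet_ncard_eq_indepDomNum
  have hDk : Nat.card D ≤ k := by rw [Nat.card_coe_set_eq, hcard]; exact hk
  let e : D → Fin k := fun d => Fin.castLE hDk (Finite.equivFin D d)
  have he : Function.Injective e :=
    (Fin.castLE_injective hDk).comp (Finite.equivFin D).injective
  calc (G.layeredExt k).indepDomNum ≤ (liftToLayers D e).ncard :=
        indepDomNum_le_ncard (hind.liftToLayers he) hdom.liftToLayers
    _ = G.indepDomNum := by rw [ncard_liftToLayers, hcard]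

section Project

variable {E : Set (V × Fin k)}

lemma IsIndepSet'.injOn_snd_of_layeredExt (hE : (G.layeredExt k).IsIndepSet' E) :
    InjOn Prod.snd E := fun x hx y hy h => by
  by_contra hne
  exact hE hx hy hne (G.layeredExt_adj.2 ⟨hne, Or.inl h⟩)

lemma IsIndepSet'.injOn_fst_of_layeredExt (hE : (G.layeredExt k).IsIndepSet' E) :
    InjOn Prod.fst E := fun x hx y hy h => by
  by_contra hne
  exact hE hx hy hne (G.layeredExt_adj.2 ⟨hne, Or.inr (Or.inl h)⟩)

lemma IsIndepSet'.image_fst_of_layeredExt (hE : (G.layeredExt k).IsIndepSet' E) :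
    G.IsIndepSet' (Prod.fst '' E) := by
  rintro _ ⟨x, hx, rfl⟩ _ ⟨y, hy, rfl⟩ hne hadj
  have hxy : x ≠ y := fun h => hne (by rw [h])
  exact hE hx hy hxy (G.layeredExt_adj.2 ⟨hxy, Or.inr (Or.inr hadj)⟩)

lemma IsDomSet.image_fst_of_layeredExt (hE : (G.layeredExt k).IsDomSet E) {j : Fin k}
    (hj : j ∉ Prod.snd '' E) : G.IsDomSet (Prod.fst '' E) := by
  intro v
  rcases hE (v, j) with hvj | ⟨u, hu, hadj⟩
  · exact absurd ⟨_, hvj, rfl⟩ hj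
  · rcases (G.layeredExt_adj.1 hadj).2 with h | h | h
    · exact absurd ⟨u, hu, h⟩ hj
    · exact Or.inl ⟨u, hu, h⟩
    · exact Or.inr ⟨u.1, ⟨u, hu, rfl⟩, h⟩

end Project

lemma indepDomNum_le_indepDomNum_layeredExt [Finite V] (hk : G.indepDomNum ≤ k) :
    G.indepDomNum ≤ (G.layeredExt k).indepDomNum := by
  obtain ⟨E, hind, hdom, hcard⟩ :=
    (G.layeredExt k).exists_isIndepSet'_isDomSet_ncard_eq_indepDomNum
  rw [← hcard]
  by_cases hlayers : Prod.snd '' E = univ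
  · calc G.indepDomNum ≤ k := hk
      _ = E.ncard := by
        rw [← hind.injOn_snd_of_layeredExt.ncard_image, hlayers, ncard_univ, Nat.card_fin]
  · obtain ⟨j, hj⟩ := (ne_univ_iff_exists_notMem _).1 hlayers
    calc G.indepDomNum ≤ (Prod.fst '' E).ncard :=
          indepDomNum_le_ncard hind.image_fst_of_layeredExt (hdom.image_fst_of_layeredExt hj)
      _ = E.ncard := hind.injOn_fst_of_layeredExt.ncard_image

end SimpleGraph

theorem indepDomNum_layeredExt_general [Fintype V] (G : SimpleGraph V) (k : ℕ)
    (hk : G.indepDomNum ≤ k) :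
    (G.layeredExt k).indepDomNum = G.indepDomNum :=
  le_antisymm (G.indepDomNum_layeredExt_le hk) (G.indepDomNum_le_indepDomNum_layeredExt hk)

/-- for k ≥ i(G), i(G_k) = i(G). -/
theorem indepDomNum_layeredExt [Fintype V] [Nonempty V] (G : SimpleGraph V) (k : ℕ)
    (hk : G.indepDomNum ≤ k) :
    (G.layeredExt k).indepDomNum = G.indepDomNum :=
  indepDomNum_layeredExt_general G k hk
end
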